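/- All βf-normalizing derivations from a given term in the fireball calculus (if any) have the same length, the same number of abstraction steps, and the same number of inert steps. -/
import Mathlib


/-- λ-terms in de Bruijn notation: variables, abstractions, applications. -/
inductive Tm : Type
  | var : Nat → Tm
  | lam : Tm → Tm
  | app : Tm → Tm → Tm

namespace Tm

/-- Shift (by one) the free de Bruijn indices `≥ k`. -/
def shift (k : Nat) : Tm → Tm
  | var n => if k ≤ n then var (n+1) else var n
  | lam t => lam (shift (k+1) t)
  | app t u => app (shift k t) (shift k u)

/-- Capture-avoiding substitution of `u` for the free variable `k` in a term. -/
def subst : Tm → Nat → Tm → Tm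
  | var n, k, u => if n = k then u else if k < n then var (n-1) else var n
  | lam t, k, u => lam (subst t (k+1) (shift 0 u))
  | app t s, k, u => app (subst t k u) (subst s k u)

/-- Values: variables and abstractions. -/
inductive IsValue : Tm → Prop
  | var : IsValue (var n)
  | lam : IsValue (lam t)

end Tm
open Tm

mutual
/-- Inert terms: `i ::= x | i f`. -/
inductive Inert : Tm → Prop
  | var : Inert (.var n)
  | app : Inert i → Fireball f → Inert (.app i f)
/-- Fireballs: `f ::= λx.t | i`. -/
inductive Fireball : Tm → Prop
  | lam : Fireball (.lam t)
  | inert : Inert i → Fireball i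
end

/-- Abstraction steps: root rule `(λx.t)(λy.u) ↦ t[x:=λy.u]`, weak closure. -/
inductive StepBL : Tm → Tm → Prop
  | beta : StepBL (.app (.lam t) (.lam u)) (subst t 0 (.lam u))
  | appL : StepBL t t' → StepBL (.app t u) (.app t' u)
  | appR : StepBL u u' → StepBL (.app t u) (.app t u')

/-- Inert steps: root rule `(λx.t)i ↦ t[x:=i]` with `i` inert, weak closure. -/
inductive StepBI : Tm → Tm → Prop
  | beta : Inert i → StepBI (.app (.lam t) i) (subst t 0 i)
  | appL : StepBI t t' → StepBI (.app t u) (.app t' u)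
  | appR : StepBI u u' → StepBI (.app t u) (.app t u')

/-- The fireball reduction `→βf = →βλ ∪ →βi`. -/
def StepBF (t u : Tm) : Prop := StepBL t u ∨ StepBI t u

/-- βf-derivations counting the number of βλ-steps and βi-steps. -/
inductive DerivBF : Tm → Tm → Nat → Nat → Prop
  | refl : DerivBF t t 0 0
  | stepL : StepBL t u → DerivBF u s a b → DerivBF t s (a+1) b
  | stepI : StepBI t u → DerivBF u s a b → DerivBF t s a (b+1)

theorem stepBL_not_inert : ∀ {t u : Tm}, StepBL t u → ¬ Inert t := by
  intro t u h
  induction h with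
  | beta => intro hi; cases hi with | app hI _ => cases hI
  | appL _ ih => intro hi; cases hi with | app hI _ => exact ih hI
  | appR h ih =>
    intro hi
    cases hi with
    | app _ hf =>
      cases hf with
      | lam => exact nomatch h
      | inert hI => exact ih hI

theorem stepBI_not_inert : ∀ {t u : Tm}, StepBI t u → ¬ Inert t := by
  intro t u h
  induction h with
  | beta _ => intro hi; cases hi with | app hI _ => cases hI
  | appL _ ih => intro hi; cases hi with | app hI _ => exact ih hI
  | appR h ih =>
    intro hi
    cases hi with
    | app _ hf =>
      cases hf with
      | lam => exact nomatch h
      | inert hI => exact ih hI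

theorem diamondLL : ∀ {t u₁ u₂ : Tm}, StepBL t u₁ → StepBL t u₂ →
    u₁ = u₂ ∨ ∃ s, StepBL u₁ s ∧ StepBL u₂ s := by
  intro t u₁ u₂ h1 h2
  induction h1 generalizing u₂ with
  | beta =>
    cases h2 with
    | beta => exact Or.inl rfl
    | appL h => exact nomatch h
    | appR h => exact nomatch h
  | appL h ih =>
    cases h2 with
    | beta => exact nomatch h
    | appL h' =>
      rcases ih h' with rfl | ⟨s, hs1, hs2⟩
      · exact Or.inl rfl
      · exact Or.inr ⟨_, .appL hs1, .appL hs2⟩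
    | appR h' => exact Or.inr ⟨_, .appR h', .appL h⟩
  | appR h ih =>
    cases h2 with
    | beta => exact nomatch h
    | appL h' => exact Or.inr ⟨_, .appL h', .appR h⟩
    | appR h' =>
      rcases ih h' with rfl | ⟨s, hs1, hs2⟩
      · exact Or.inl rfl
      · exact Or.inr ⟨_, .appR hs1, .appR hs2⟩

theorem diamondII : ∀ {t u₁ u₂ : Tm}, StepBI t u₁ → StepBI t u₂ →
    u₁ = u₂ ∨ ∃ s, StepBI u₁ s ∧ StepBI u₂ s := by
  intro t u₁ u₂ h1 h2
  induction h1 generalizing u₂ with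
  | beta hi =>
    cases h2 with
    | beta => exact Or.inl rfl
    | appL h => exact nomatch h
    | appR h => exact absurd hi (stepBI_not_inert h)
  | appL h ih =>
    cases h2 with
    | beta => exact nomatch h
    | appL h' =>
      rcases ih h' with rfl | ⟨s, hs1, hs2⟩
      · exact Or.inl rfl
      · exact Or.inr ⟨_, .appL hs1, .appL hs2⟩
    | appR h' => exact Or.inr ⟨_, .appR h', .appL h⟩
  | appR h ih =>
    cases h2 with
    | beta hi => exact absurd hi (stepBI_not_inert h)
    | appL h' => exact Or.inr ⟨_, .appL h', .appR h⟩
    | appR h' =>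
      rcases ih h' with rfl | ⟨s, hs1, hs2⟩
      · exact Or.inl rfl
      · exact Or.inr ⟨_, .appR hs1, .appR hs2⟩

theorem diamondLI : ∀ {t u₁ u₂ : Tm}, StepBL t u₁ → StepBI t u₂ →
    ∃ s, StepBI u₁ s ∧ StepBL u₂ s := by
  intro t u₁ u₂ h1 h2
  induction h1 generalizing u₂ with
  | beta =>
    cases h2 with
    | beta hi => exact absurd hi (fun hi => nomatch hi)
    | appL h => exact nomatch h
    | appR h => exact nomatch h
  | appL h ih =>
    cases h2 with
    | beta => exact nomatch h
    | appL h' =>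
      obtain ⟨s, hs1, hs2⟩ := ih h'
      exact ⟨_, .appL hs1, .appL hs2⟩
    | appR h' => exact ⟨_, .appR h', .appL h⟩
  | appR h ih =>
    cases h2 with
    | beta hi => exact absurd hi (stepBL_not_inert h)
    | appL h' => exact ⟨_, .appL h', .appR h⟩
    | appR h' =>
      obtain ⟨s, hs1, hs2⟩ := ih h'
      exact ⟨_, .appR hs1, .appR hs2⟩

theorem key : ∀ {t s : Tm} {a b : Nat}, DerivBF t s a b → (∀ v, ¬ StepBF s v) →
    (∀ u, StepBL t u → ∃ a', a = a' + 1 ∧ DerivBF u s a' b) ∧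
    (∀ u, StepBI t u → ∃ b', b = b' + 1 ∧ DerivBF u s a b') := by
  intro t s a b d hs
  induction d with
  | refl =>
    exact ⟨fun u h => absurd (Or.inl h) (hs u),
           fun u h => absurd (Or.inr h) (hs u)⟩
  | @stepL t u₂ s a' b h2 d' ih =>
    constructor
    · intro u h
      rcases diamondLL h h2 with rfl | ⟨w, hw1, hw2⟩
      · exact ⟨a', rfl, d'⟩
      · obtain ⟨a'', ha, dw⟩ := (ih hs).1 w hw2
        exact ⟨a', rfl, ha ▸ DerivBF.stepL hw1 dw⟩
    · intro u h
      obtain ⟨w, hw2, hw1⟩ := diamondLI h2 h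
      obtain ⟨b'', hb, dw⟩ := (ih hs).2 w hw2
      exact ⟨b'', hb, DerivBF.stepL hw1 dw⟩
  | @stepI t u₂ s a b' h2 d' ih =>
    constructor
    · intro u h
      obtain ⟨w, hw1, hw2⟩ := diamondLI h h2
      obtain ⟨a'', ha, dw⟩ := (ih hs).1 w hw2
      exact ⟨a'', ha, DerivBF.stepI hw1 dw⟩
    · intro u h
      rcases diamondII h h2 with rfl | ⟨w, hw1, hw2⟩
      · exact ⟨b', rfl, d'⟩
      · obtain ⟨b'', hb, dw⟩ := (ih hs).2 w hw2
        exact ⟨b', rfl, hb ▸ DerivBF.stepI hw1 dw⟩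

/-- all βf-normalizing derivations from a given term have the same
number of βλ-steps, the same number of βi-steps, and the same length. -/
theorem bf_normalizing_derivations_same_length
    (t u₁ u₂ : Tm) (a₁ b₁ a₂ b₂ : Nat)
    (d₁ : DerivBF t u₁ a₁ b₁) (d₂ : DerivBF t u₂ a₂ b₂)
    (h₁ : ∀ s, ¬ StepBF u₁ s) (h₂ : ∀ s, ¬ StepBF u₂ s) :
    a₁ = a₂ ∧ b₁ = b₂ ∧ a₁ + b₁ = a₂ + b₂ := by
  induction d₁ generalizing u₂ a₂ b₂ with
  | refl =>
    cases d₂ with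
    | refl => exact ⟨rfl, rfl, rfl⟩
    | stepL h _ => exact absurd (Or.inl h) (h₁ _)
    | stepI h _ => exact absurd (Or.inr h) (h₁ _)
  | stepL h d ih =>
    obtain ⟨a', ha, d'⟩ := (key d₂ h₂).1 _ h
    obtain ⟨e1, e2, _⟩ := ih _ _ _ d' h₁ h₂
    subst ha; omega
  | stepI h d ih =>
    obtain ⟨b', hb, d'⟩ := (key d₂ h₂).2 _ h
    obtain ⟨e1, e2, _⟩ := ih _ _ _ d' h₁ h₂
    subst hb; omega
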